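/- Fix a > 0 and c ∈ (0,1), n ≥ 2. The 2×2 matrix-valued function S₀(t) = [[12(26-26n+5c-6nc+c²)/((1-c)c a²(1-t)³), -6(14-14n+c-2nc+c²)/((1-c)c a(1-t)²)], [-6(14-14n+c-2nc+c²)/((1-c)c a(1-t)²), -4((c+6)(n-1)+c(n-c))/((1-c)c(1-t))]] satisfies the linear matrix ODE S₀'(t) = S₀(t)(C₀K(t) + C₄ᵀ) + (K(t)C₀ + C₄)S₀(t) + K(t)C₀K(t) + (32(n-1)/((1-c)(1-t)²)) C₀ + (72(n-1)/(c a²(1-t)⁴)) C₅, where C₀ = [[0,0],[0,1]], C₄ = [[0,0],[a,0]], C₅ = [[1,0],[0,0]], and K(t) = [[12/(a²(1-t)³), -6/(a(1-t)²)], [-6/(a(1-t)²), 4/(1-t)]]. -/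

import Mathlib

open Matrix Set
set_option maxHeartbeats 1600000

/-- The explicit comparison solution in the proof of Theorem 1.1. -/
noncomputable def S0fn (n : ℕ) (a c t : ℝ) : Matrix (Fin 2) (Fin 2) ℝ :=
  !![12 * (26 - 26 * (n : ℝ) + 5 * c - 6 * (n : ℝ) * c + c ^ 2) /
        ((1 - c) * c * a ^ 2 * (1 - t) ^ 3),
      -(6 * (14 - 14 * (n : ℝ) + c - 2 * (n : ℝ) * c + c ^ 2) /
        ((1 - c) * c * a * (1 - t) ^ 2));
      -(6 * (14 - 14 * (n : ℝ) + c - 2 * (n : ℝ) * c + c ^ 2) /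
        ((1 - c) * c * a * (1 - t) ^ 2)),
      -(4 * ((c + 6) * ((n : ℝ) - 1) + c * ((n : ℝ) - c)) / ((1 - c) * c * (1 - t)))]

/-- The gauge matrix `K(t)` in the proof of Theorem 1.1. -/
noncomputable def Kfn (a t : ℝ) : Matrix (Fin 2) (Fin 2) ℝ :=
  !![12 / (a ^ 2 * (1 - t) ^ 3), -(6 / (a * (1 - t) ^ 2));
      -(6 / (a * (1 - t) ^ 2)), 4 / (1 - t)]

lemma aux_deriv (C E t : ℝ) (k : ℕ) (hE : E ≠ 0) (ht : (1:ℝ) - t ≠ 0) :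
    HasDerivAt (fun s => C / (E * (1 - s) ^ (k + 1)))
      (((k : ℝ) + 1) * C / (E * (1 - t) ^ (k + 2))) t := by
  have hbase : HasDerivAt (fun s : ℝ => 1 - s) (-1) t := by
    simpa using (hasDerivAt_id t).const_sub 1
  have hp := hbase.pow (k + 1)
  have hden := hp.const_mul E
  have hne : E * (1 - t) ^ (k + 1) ≠ 0 := mul_ne_zero hE (pow_ne_zero _ ht)
  have h := (hasDerivAt_const t C).div hden hne
  refine h.congr_deriv ?_
  simp only [Pi.pow_apply, Nat.add_sub_cancel, Nat.cast_add, Nat.cast_one]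
  field_simp
  ring

theorem S0_solves_linear_matrix_ODE (n : ℕ) (hn : 2 ≤ n)
    (a c : ℝ) (ha : 0 < a) (hc : 0 < c) (hc1 : c < 1) :
    ∀ t ∈ Ico (0:ℝ) 1, ∀ i j,
      HasDerivAt (fun s => S0fn n a c s i j)
        (((S0fn n a c t * ((!![0, 0; 0, 1] : Matrix (Fin 2) (Fin 2) ℝ) * Kfn a t +
            (!![0, 0; a, 0] : Matrix (Fin 2) (Fin 2) ℝ)ᵀ)
          + (Kfn a t * !![0, 0; 0, 1] + !![0, 0; a, 0]) * S0fn n a c t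
          + Kfn a t * !![0, 0; 0, 1] * Kfn a t
          + (32 * ((n : ℝ) - 1) / ((1 - c) * (1 - t) ^ 2)) • !![0, 0; 0, 1]
          + (72 * ((n : ℝ) - 1) / (c * a ^ 2 * (1 - t) ^ 4)) •
              (!![1, 0; 0, 0] : Matrix (Fin 2) (Fin 2) ℝ) : Matrix (Fin 2) (Fin 2) ℝ)) i j) t := by
  rintro t ⟨ht0, ht1⟩ i j
  have ha' : a ≠ 0 := ne_of_gt ha
  have hc' : c ≠ 0 := ne_of_gt hc
  have hc1' : (1:ℝ) - c ≠ 0 := sub_ne_zero.mpr (by linarith)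
  have ht : (1:ℝ) - t ≠ 0 := sub_ne_zero.mpr (by linarith)
  have hE1 : (1 - c) * c * a ^ 2 ≠ 0 := by positivity
  have hE2 : (1 - c) * c * a ≠ 0 := by positivity
  have hE3 : (1 - c) * c ≠ 0 := by positivity
  have hT : (!![(0:ℝ), 0; a, 0] : Matrix (Fin 2) (Fin 2) ℝ)ᵀ = !![0, a; 0, 0] := by
    ext i j; fin_cases i <;> fin_cases j <;> rfl
  fin_cases i <;> fin_cases j <;>
    simp only [S0fn, Kfn, hT, Fin.zero_eta, Fin.mk_one, Matrix.mul_apply, Matrix.add_apply,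
      Matrix.smul_apply, Fin.sum_univ_two, Matrix.of_apply, Matrix.cons_val',
      Matrix.cons_val_zero, Matrix.cons_val_one, Matrix.head_cons, Matrix.head_fin_const,
      Matrix.empty_val', Matrix.cons_val_fin_one, smul_eq_mul, Fin.isValue, zero_mul,
      mul_zero, add_zero, zero_add, mul_one, one_mul]
  · convert aux_deriv (12 * (26 - 26 * (n : ℝ) + 5 * c - 6 * (n : ℝ) * c + c ^ 2))
      ((1 - c) * c * a ^ 2) t 2 hE1 ht using 1
    field_simp
    ring
  · refine (aux_deriv (6 * (14 - 14 * (n : ℝ) + c - 2 * (n : ℝ) * c + c ^ 2))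
      ((1 - c) * c * a) t 1 hE2 ht).neg.congr_deriv ?_
    field_simp
    ring
  · refine (aux_deriv (6 * (14 - 14 * (n : ℝ) + c - 2 * (n : ℝ) * c + c ^ 2))
      ((1 - c) * c * a) t 1 hE2 ht).neg.congr_deriv ?_
    field_simp
    ring
  · have h := (aux_deriv (4 * ((c + 6) * ((n : ℝ) - 1) + c * ((n : ℝ) - c)))
      ((1 - c) * c) t 0 hE3 ht).neg
    norm_num at h
    refine h.congr_deriv ?_
    field_simp
    ring
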